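/- Let I ⊆ ℝ be an open interval and let C : I → (real symmetric positive definite n×n matrices) be continuously differentiable. Let F : ℝⁿ → ℝ be smooth with compact support. Then the function t ↦ ∫_{ℝⁿ} F dN(0, C(t)) is differentiable on I and d/dt ∫ F dN(0, C(t)) = (1/2) ∑_{i,j=1}^n C'_{ij}(t) ∫ ∂_i ∂_j F dN(0, C(t)), where N(0, C) denotes the centered Gaussian measure on ℝⁿ with covariance matrix C. -/

import Mathlib

/-!
Statement 5: differentiation of a Gaussian expectation with respect to the
covariance matrix:
`d/dt ∫ F dN(0, C(t)) = (1/2) ∑_{i,j} C'_{ij}(t) ∫ ∂_i ∂_j F dN(0, C(t))`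
for `C` a continuously differentiable family of real symmetric positive
definite matrices and `F` smooth with compact support.
-/

open Real Matrix MeasureTheory

noncomputable section

namespace SommerfieldStmt5

/-- The integral of `F` against the centered Gaussian measure `N(0, C)` on `ℝⁿ`
with (positive definite) covariance matrix `C`, written via its density
`(2π)^{-n/2} (det C)^{-1/2} exp(-⟨x, C⁻¹ x⟩/2)`. -/
def gaussianIntegral {n : ℕ} (C : Matrix (Fin n) (Fin n) ℝ)
    (F : (Fin n → ℝ) → ℝ) : ℝ :=
  ∫ x : Fin n → ℝ,
    F x * ((Real.sqrt ((2 * π) ^ n * C.det))⁻¹ * Real.exp (-(x ⬝ᵥ (C⁻¹ *ᵥ x)) / 2))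

/-- The partial derivative `∂_i F` of `F : ℝⁿ → ℝ`. -/
def pderiv {n : ℕ} (i : Fin n) (F : (Fin n → ℝ) → ℝ) : (Fin n → ℝ) → ℝ :=
  fun x => fderiv ℝ F x (Pi.single i 1)

variable {n : ℕ}

/-- The Gaussian density. -/
def dens (A : Matrix (Fin n) (Fin n) ℝ) (x : Fin n → ℝ) : ℝ :=
  (Real.sqrt ((2 * π) ^ n * A.det))⁻¹ * Real.exp (-(x ⬝ᵥ (A⁻¹ *ᵥ x)) / 2)



variable {n : ℕ}

/-- entries of `1 + B * (C s - A)` have derivatives `(B * A') i j`. -/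
lemma entry_hasDerivAt {C : ℝ → Matrix (Fin n) (Fin n) ℝ} {A' : Matrix (Fin n) (Fin n) ℝ}
    {t : ℝ} (hC : ∀ i j, HasDerivAt (fun s => C s i j) (A' i j) t)
    (B A : Matrix (Fin n) (Fin n) ℝ) (i j : Fin n) :
    HasDerivAt (fun s => (1 + B * (C s - A)) i j) ((B * A') i j) t := by
  have : ∀ s, (1 + B * (C s - A)) i j
      = (1 : Matrix (Fin n) (Fin n) ℝ) i j + ∑ k, B i k * (C s k j - A k j) := by
    intro s
    simp [Matrix.add_apply, Matrix.mul_apply, Matrix.sub_apply]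
  simp only [this]
  have h : HasDerivAt (fun s => ∑ k, B i k * (C s k j - A k j)) (∑ k, B i k * A' k j) t := by
    apply HasDerivAt.fun_sum
    intro k _
    exact ((hC k j).sub_const (A k j)).const_mul (B i k)
  simpa [Matrix.mul_apply] using h.const_add ((1 : Matrix (Fin n) (Fin n) ℝ) i j)

lemma det_one_add_hasDerivAt {M : ℝ → Matrix (Fin n) (Fin n) ℝ} {M' : Matrix (Fin n) (Fin n) ℝ}
    {t : ℝ} (hM : ∀ i j, HasDerivAt (fun s => M s i j) (M' i j) t) (hMt : M t = 1) :
    HasDerivAt (fun s => (M s).det) M'.trace t := by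
  have hdet : ∀ s, (M s).det = ∑ σ : Equiv.Perm (Fin n),
      (Equiv.Perm.sign σ : ℤ) * ∏ i, M s (σ i) i := fun s => Matrix.det_apply' (M s)
  simp only [hdet]
  have h : HasDerivAt (fun s => ∑ σ : Equiv.Perm (Fin n),
      (Equiv.Perm.sign σ : ℤ) * ∏ i, M s (σ i) i)
      (∑ σ : Equiv.Perm (Fin n), (Equiv.Perm.sign σ : ℤ) *
        ∑ i, (∏ j ∈ Finset.univ.erase i, M t (σ j) j) • M' (σ i) i) t := by
    apply HasDerivAt.fun_sum
    intro σ _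
    exact (HasDerivAt.fun_finsetProd (fun i _ => hM (σ i) i)).const_mul _
  convert h using 1
  rw [Finset.sum_eq_single (1 : Equiv.Perm (Fin n))]
  · simp only [hMt, Equiv.Perm.sign_one, Units.val_one, Int.cast_one, one_mul, Equiv.Perm.one_apply]
    rw [Matrix.trace]
    congr 1
    ext i
    rw [Finset.prod_eq_one (fun j _ => by simp [Matrix.one_apply])]
    simp [Matrix.diag]
  · intro σ _ hσ
    have : ∀ i : Fin n, (∏ j ∈ Finset.univ.erase i, M t (σ j) j) = 0 := by
      intro i
      -- since σ ≠ 1 there is j ≠ i with σ j ≠ j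
      by_contra h0
      apply hσ
      have hfix : ∀ j, j ≠ i → σ j = j := by
        intro j hj
        by_contra hne
        apply h0
        apply Finset.prod_eq_zero (Finset.mem_erase.mpr ⟨hj, Finset.mem_univ j⟩)
        rw [hMt]
        exact Matrix.one_apply_ne hne
      have hi : σ i = i := by
        by_contra hne
        have := hfix (σ i) (hne)
        exact hne (σ.injective this)
      ext j
      by_cases hj : j = i
      · simp [hj, hi]
      · simp [hfix j hj]
    simp [this]
  · intro h
    exact absurd (Finset.mem_univ _) h

lemma det_hasDerivAt {C : ℝ → Matrix (Fin n) (Fin n) ℝ} {A' : Matrix (Fin n) (Fin n) ℝ}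
    {t : ℝ} (hC : ∀ i j, HasDerivAt (fun s => C s i j) (A' i j) t)
    (hunit : IsUnit (C t).det) :
    HasDerivAt (fun s => (C s).det) ((C t).det * ((C t)⁻¹ * A').trace) t := by
  set A := C t with hA
  set B := A⁻¹ with hB
  have key : ∀ s, (C s).det = A.det * (1 + B * (C s - A)).det := by
    intro s
    rw [← Matrix.det_mul]
    congr 1
    rw [Matrix.mul_add, Matrix.mul_one, ← Matrix.mul_assoc, Matrix.mul_nonsing_inv _ hunit,
      Matrix.one_mul]
    abel
  have h1 : HasDerivAt (fun s => (1 + B * (C s - A)).det) ((B * A').trace) t := by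
    apply det_one_add_hasDerivAt (fun i j => entry_hasDerivAt hC B A i j)
    simp [← hA]
  rw [show (fun s => (C s).det) = (fun s => A.det * (1 + B * (C s - A)).det) from funext key]
  exact h1.const_mul A.det


variable {n : ℕ}

lemma det_differentiableAt {D : ℝ → Matrix (Fin n) (Fin n) ℝ} {t : ℝ}
    (hD : ∀ i j, DifferentiableAt ℝ (fun s => D s i j) t) :
    DifferentiableAt ℝ (fun s => (D s).det) t := by
  have : (fun s => (D s).det) = fun s => ∑ σ : Equiv.Perm (Fin n),
      ((Equiv.Perm.sign σ : ℤ) : ℝ) * ∏ i, D s (σ i) i := funext fun s => Matrix.det_apply' (D s)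
  rw [this]
  exact DifferentiableAt.fun_sum fun σ _ =>
    (DifferentiableAt.fun_finsetProd (u := Finset.univ) fun i _ => hD (σ i) i).const_mul _

lemma inv_entry_differentiableAt {C : ℝ → Matrix (Fin n) (Fin n) ℝ} {t : ℝ}
    (hC : ∀ i j, DifferentiableAt ℝ (fun s => C s i j) t)
    (hunit : IsUnit (C t).det) (i j : Fin n) :
    DifferentiableAt ℝ (fun s => (C s)⁻¹ i j) t := by
  have h1 : ∀ s, (C s)⁻¹ i j = ((C s).det)⁻¹ * (C s).adjugate i j := by
    intro s
    rw [Matrix.inv_def, Matrix.smul_apply, Ring.inverse_eq_inv, smul_eq_mul]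
  simp only [h1]
  have hdet : DifferentiableAt ℝ (fun s => (C s).det) t := det_differentiableAt hC
  have hne : (C t).det ≠ 0 := hunit.ne_zero
  apply DifferentiableAt.mul (hdet.inv hne)
  have h2 : ∀ s, (C s).adjugate i j = ((C s).updateRow j (Pi.single i 1)).det := by
    intro s; rw [Matrix.adjugate_apply]
  simp only [h2]
  apply det_differentiableAt
  intro k l
  by_cases hk : k = j
  · simp only [Matrix.updateRow_apply, hk, if_true]
    exact differentiableAt_const _
  · simp only [Matrix.updateRow_apply, hk, if_false]
    exact hC k l

lemma inv_hasDerivAt {C : ℝ → Matrix (Fin n) (Fin n) ℝ} {A' : Matrix (Fin n) (Fin n) ℝ} {t : ℝ}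
    (hC : ∀ i j, HasDerivAt (fun s => C s i j) (A' i j) t)
    (hunit : ∀ᶠ s in nhds t, IsUnit (C s).det) (i j : Fin n) :
    HasDerivAt (fun s => (C s)⁻¹ i j) ((-((C t)⁻¹ * A' * (C t)⁻¹)) i j) t := by
  set A := C t with hA
  set B := A⁻¹ with hB
  have hAunit : IsUnit A.det := hunit.self_of_nhds
  have hdiff : ∀ i j, DifferentiableAt ℝ (fun s => (C s)⁻¹ i j) t :=
    inv_entry_differentiableAt (fun i j => (hC i j).differentiableAt) hAunit
  set N' : Matrix (Fin n) (Fin n) ℝ :=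
    Matrix.of (fun i j => deriv (fun s => (C s)⁻¹ i j) t) with hN'
  have hN : ∀ i j, HasDerivAt (fun s => (C s)⁻¹ i j) (N' i j) t :=
    fun i j => (hdiff i j).hasDerivAt
  have hprod : ∀ i j, HasDerivAt (fun s => ∑ k, C s i k * (C s)⁻¹ k j)
      ((A' * B + A * N') i j) t := by
    intro i j
    have h := HasDerivAt.fun_sum (fun k (_ : k ∈ Finset.univ) => (hC i k).mul (hN k j))
    have : (A' * B + A * N') i j = ∑ k, (A' i k * (C t)⁻¹ k j + C t i k * N' k j) := by
      simp [Matrix.add_apply, Matrix.mul_apply, Finset.sum_add_distrib, ← hA, ← hB]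
    rw [this]
    exact h
  have hconst : ∀ i j, HasDerivAt (fun s => ∑ k, C s i k * (C s)⁻¹ k j)
      ((0 : Matrix (Fin n) (Fin n) ℝ) i j) t := by
    intro i j
    have heq : (fun s => ∑ k, C s i k * (C s)⁻¹ k j)
        =ᶠ[nhds t] (fun _ => (1 : Matrix (Fin n) (Fin n) ℝ) i j) := by
      filter_upwards [hunit] with s hs
      rw [← Matrix.mul_apply, Matrix.mul_nonsing_inv _ hs]
    rw [Matrix.zero_apply]
    exact (hasDerivAt_const t _).congr_of_eventuallyEq heq
  have hzero : A' * B + A * N' = 0 := by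
    ext i j
    exact (hprod i j).unique (hconst i j)
  have hAN : A * N' = -(A' * B) := by
    have := hzero
    rw [add_comm] at this
    linear_combination (norm := module) this
  have hNval : N' = -(B * A' * B) := by
    have : N' = B * (A * N') := by
      rw [← Matrix.mul_assoc, hB, Matrix.nonsing_inv_mul _ hAunit, Matrix.one_mul]
    rw [this, hAN, Matrix.mul_neg, Matrix.mul_assoc]
  rw [← hNval]
  exact hN i j


variable {n : ℕ}

lemma quad_eq_sum (M : Matrix (Fin n) (Fin n) ℝ) (x : Fin n → ℝ) :
    x ⬝ᵥ (M *ᵥ x) = ∑ i, ∑ j, x i * (M i j * x j) := by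
  simp [dotProduct, Matrix.mulVec, Finset.mul_sum]

lemma quad_hasDerivAt {N : ℝ → Matrix (Fin n) (Fin n) ℝ} {N' : Matrix (Fin n) (Fin n) ℝ} {t : ℝ}
    (hN : ∀ i j, HasDerivAt (fun s => N s i j) (N' i j) t) (x : Fin n → ℝ) :
    HasDerivAt (fun s => x ⬝ᵥ (N s *ᵥ x)) (x ⬝ᵥ (N' *ᵥ x)) t := by
  simp only [quad_eq_sum]
  exact HasDerivAt.fun_sum fun i _ => HasDerivAt.fun_sum fun j _ =>
    (((hN i j).mul_const (x j)).const_mul (x i))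

/-- time-derivative of the density. -/
lemma dens_hasDerivAt {C : ℝ → Matrix (Fin n) (Fin n) ℝ} {A' : Matrix (Fin n) (Fin n) ℝ} {t : ℝ}
    (hC : ∀ i j, HasDerivAt (fun s => C s i j) (A' i j) t)
    (hunit : ∀ᶠ s in nhds t, IsUnit (C s).det)
    (hdetpos : 0 < (C t).det) (x : Fin n → ℝ) :
    HasDerivAt (fun s => dens (C s) x)
      (dens (C t) x * ((1 : ℝ) / 2) *
        (x ⬝ᵥ (((C t)⁻¹ * A' * (C t)⁻¹) *ᵥ x) - ((C t)⁻¹ * A').trace)) t := by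
  set A := C t with hA
  set B := A⁻¹ with hB
  have hAunit : IsUnit A.det := isUnit_iff_ne_zero.mpr hdetpos.ne'
  have twopin : (0:ℝ) < (2 * π) ^ n := pow_pos (by positivity) n
  -- w s = (2π)^n * det (C s)
  have hw : HasDerivAt (fun s => (2 * π) ^ n * (C s).det)
      ((2 * π) ^ n * (A.det * (B * A').trace)) t :=
    (det_hasDerivAt hC hAunit).const_mul _
  have hwt : (0:ℝ) < (2 * π) ^ n * A.det := by positivity
  have hsqrt : HasDerivAt (fun s => Real.sqrt ((2 * π) ^ n * (C s).det))
      ((2 * π) ^ n * (A.det * (B * A').trace) / (2 * Real.sqrt ((2 * π) ^ n * A.det))) t :=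
    hw.sqrt hwt.ne'
  have hsqrtpos : 0 < Real.sqrt ((2 * π) ^ n * A.det) := Real.sqrt_pos.mpr hwt
  have hinvsqrt : HasDerivAt (fun s => (Real.sqrt ((2 * π) ^ n * (C s).det))⁻¹)
      (-((2 * π) ^ n * (A.det * (B * A').trace) / (2 * Real.sqrt ((2 * π) ^ n * A.det))) /
        (Real.sqrt ((2 * π) ^ n * A.det)) ^ 2) t :=
    hsqrt.inv hsqrtpos.ne'
  -- q s = x ⬝ᵥ (C s)⁻¹ x
  have hq : HasDerivAt (fun s => x ⬝ᵥ ((C s)⁻¹ *ᵥ x)) (x ⬝ᵥ ((-(B * A' * B)) *ᵥ x)) t :=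
    quad_hasDerivAt (fun i j => inv_hasDerivAt hC hunit i j) x
  have hexp : HasDerivAt (fun s => Real.exp (-(x ⬝ᵥ ((C s)⁻¹ *ᵥ x)) / 2))
      (Real.exp (-(x ⬝ᵥ (B *ᵥ x)) / 2) * (-(x ⬝ᵥ ((-(B * A' * B)) *ᵥ x)) / 2)) t := by
    have h1 : HasDerivAt (fun s => -(x ⬝ᵥ ((C s)⁻¹ *ᵥ x)) / 2)
        (-(x ⬝ᵥ ((-(B * A' * B)) *ᵥ x)) / 2) t := hq.neg.div_const 2
    simpa [mul_comm, Function.comp_def] using (Real.hasDerivAt_exp (-(x ⬝ᵥ (B *ᵥ x)) / 2)).comp t h1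
  have hmul := hinvsqrt.mul hexp
  refine hmul.congr_deriv ?_
  simp only [← hA, ← hB, Matrix.neg_mulVec, dotProduct_neg, dens, neg_neg]
  set r := Real.sqrt ((2 * π) ^ n * A.det) with hr
  set e := Real.exp (-(x ⬝ᵥ (B *ᵥ x)) / 2) with he
  set Q := x ⬝ᵥ ((B * A' * B) *ᵥ x) with hQ
  set τ := (B * A').trace with hτ
  have h2 : r ^ 2 = (2 * π) ^ n * A.det := Real.sq_sqrt hwt.le
  have key : (2 * π) ^ n * (A.det * τ) = r ^ 2 * τ := by rw [h2]; ring
  rw [key]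
  have hrne : r ≠ 0 := hsqrtpos.ne'
  field_simp
  ring

variable {n : ℕ}

set_option maxHeartbeats 1000000 in
/-- derivative of the quadratic form -/
lemma quad_hasFDerivAt (B : Matrix (Fin n) (Fin n) ℝ) (x : Fin n → ℝ) :
    HasFDerivAt (fun y => y ⬝ᵥ (B *ᵥ y))
      (∑ i, ∑ j, B i j • ((x i) • ContinuousLinearMap.proj j
        + (x j) • (ContinuousLinearMap.proj i : (Fin n → ℝ) →L[ℝ] ℝ))) x := by
  have hq : (fun y : Fin n → ℝ => y ⬝ᵥ (B *ᵥ y))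
      = fun y => ∑ i, ∑ j, B i j * (y i * y j) := by
    funext y
    simp [dotProduct, Matrix.mulVec, Finset.mul_sum]
    congr 1; funext i; congr 1; funext j; ring
  rw [hq]
  apply HasFDerivAt.fun_sum; intro i _
  apply HasFDerivAt.fun_sum; intro j _
  have hi : HasFDerivAt (fun y : Fin n → ℝ => y i)
      (ContinuousLinearMap.proj i : (Fin n → ℝ) →L[ℝ] ℝ) x := by
    exact hasFDerivAt_apply (𝕜 := ℝ) i x
  have hj : HasFDerivAt (fun y : Fin n → ℝ => y j)
      (ContinuousLinearMap.proj j : (Fin n → ℝ) →L[ℝ] ℝ) x := by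
    exact hasFDerivAt_apply (𝕜 := ℝ) j x
  exact (hi.mul hj).const_mul (B i j)

lemma dens_hasFDerivAt (A : Matrix (Fin n) (Fin n) ℝ) (x : Fin n → ℝ) :
    HasFDerivAt (dens A)
      ((-(dens A x) / 2) • (∑ i, ∑ j, A⁻¹ i j • ((x i) • ContinuousLinearMap.proj j
        + (x j) • (ContinuousLinearMap.proj i : (Fin n → ℝ) →L[ℝ] ℝ)))) x := by
  set c := (Real.sqrt ((2 * π) ^ n * A.det))⁻¹ with hc
  set L := ∑ i, ∑ j, A⁻¹ i j • ((x i) • ContinuousLinearMap.proj j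
        + (x j) • (ContinuousLinearMap.proj i : (Fin n → ℝ) →L[ℝ] ℝ)) with hL
  have h1 : HasFDerivAt (fun y : Fin n → ℝ => -(y ⬝ᵥ (A⁻¹ *ᵥ y)) / 2) ((-(1:ℝ)/2) • L) x := by
    have h0 := (quad_hasFDerivAt A⁻¹ x).const_mul (-(1:ℝ)/2)
    rw [show (fun y : Fin n → ℝ => -(y ⬝ᵥ (A⁻¹ *ᵥ y)) / 2)
      = (fun y : Fin n → ℝ => (-(1:ℝ)/2) * (y ⬝ᵥ (A⁻¹ *ᵥ y))) from funext fun y => by ring]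
    exact h0
  have h2 : HasFDerivAt (fun y : Fin n → ℝ => Real.exp (-(y ⬝ᵥ (A⁻¹ *ᵥ y)) / 2))
      ((Real.exp (-(x ⬝ᵥ (A⁻¹ *ᵥ x)) / 2) * (-(1:ℝ)/2)) • L) x := by
    have := (Real.hasDerivAt_exp (-(x ⬝ᵥ (A⁻¹ *ᵥ x)) / 2)).comp_hasFDerivAt x h1
    rw [← smul_smul]
    exact this
  have h3 := h2.const_mul c
  refine h3.congr_fderiv ?_
  rw [smul_smul]
  unfold dens
  rw [← hc]
  congr 1
  ring

/-- first spatial partial derivative of the density -/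
lemma dens_pderiv (A : Matrix (Fin n) (Fin n) ℝ) (hB : A⁻¹.IsSymm) (j : Fin n) :
    pderiv j (dens A) = fun x => dens A x * (-((A⁻¹ *ᵥ x) j)) := by
  funext x
  rw [pderiv, (dens_hasFDerivAt A x).fderiv]
  simp only [ContinuousLinearMap.smul_apply, ContinuousLinearMap.sum_apply,
    ContinuousLinearMap.add_apply, ContinuousLinearMap.proj_apply, Pi.single_apply,
    smul_eq_mul]
  have hsymmentry : ∀ i, A⁻¹ i j = A⁻¹ j i := fun i => by
    conv_lhs => rw [← hB]
    rfl
  have key : (∑ i, ∑ k, A⁻¹ i k * ((x i * if k = j then (1:ℝ) else 0)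
      + x k * if i = j then (1:ℝ) else 0)) = 2 * (A⁻¹ *ᵥ x) j := by
    have step : ∀ i k : Fin n, A⁻¹ i k * ((x i * if k = j then (1:ℝ) else 0)
        + x k * if i = j then (1:ℝ) else 0)
        = (if k = j then A⁻¹ i j * x i else 0) + (if i = j then A⁻¹ j k * x k else 0) := by
      intro i k
      by_cases h1 : k = j <;> by_cases h2 : i = j <;> simp [h1, h2] <;> ring
    simp only [step, Finset.sum_add_distrib]
    have s1 : (∑ i : Fin n, ∑ k : Fin n, if k = j then A⁻¹ i j * x i else (0:ℝ))
        = ∑ i, A⁻¹ i j * x i :=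
      Finset.sum_congr rfl fun i _ => by simp
    have s2 : (∑ i : Fin n, ∑ k : Fin n, if i = j then A⁻¹ j k * x k else (0:ℝ))
        = ∑ k, A⁻¹ j k * x k := by
      have : ∀ i : Fin n, (∑ k, if i = j then A⁻¹ j k * x k else (0:ℝ))
          = if i = j then ∑ k, A⁻¹ j k * x k else 0 := by
        intro i; by_cases h : i = j <;> simp [h]
      simp [this]
    rw [s1, s2]
    have t1 : ∑ i, A⁻¹ i j * x i = (A⁻¹ *ᵥ x) j := by
      simp only [Matrix.mulVec, dotProduct]
      exact Finset.sum_congr rfl fun i _ => by rw [hsymmentry i]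
    have t2 : ∑ k, A⁻¹ j k * x k = (A⁻¹ *ᵥ x) j := by
      simp [Matrix.mulVec, dotProduct]
    rw [t1, t2]; ring
  rw [key]
  ring


variable {n : ℕ}

lemma dens_differentiable (A : Matrix (Fin n) (Fin n) ℝ) : Differentiable ℝ (dens A) :=
  fun x => (dens_hasFDerivAt A x).differentiableAt

lemma mulVec_hasFDerivAt (B : Matrix (Fin n) (Fin n) ℝ) (j : Fin n) (x : Fin n → ℝ) :
    HasFDerivAt (fun y : Fin n → ℝ => (B *ᵥ y) j)
      (∑ k, B j k • (ContinuousLinearMap.proj k : (Fin n → ℝ) →L[ℝ] ℝ)) x := by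
  have : (fun y : Fin n → ℝ => (B *ᵥ y) j) = fun y => ∑ k, B j k * y k := by
    funext y; simp [Matrix.mulVec, dotProduct]
  rw [this]
  apply HasFDerivAt.fun_sum
  intro k _
  exact (show HasFDerivAt (fun y : Fin n → ℝ => y k)
    (ContinuousLinearMap.proj k : (Fin n → ℝ) →L[ℝ] ℝ) x from hasFDerivAt_apply (𝕜 := ℝ) k x
    ).const_mul (B j k)

lemma mulVec_differentiable (B : Matrix (Fin n) (Fin n) ℝ) (j : Fin n) :
    Differentiable ℝ (fun y : Fin n → ℝ => (B *ᵥ y) j) :=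
  fun x => (mulVec_hasFDerivAt B j x).differentiableAt

lemma dens_pderiv_pderiv (A : Matrix (Fin n) (Fin n) ℝ) (hB : A⁻¹.IsSymm) (i j : Fin n) :
    pderiv i (pderiv j (dens A)) =
      fun x => dens A x * ((A⁻¹ *ᵥ x) i * (A⁻¹ *ᵥ x) j - A⁻¹ i j) := by
  rw [dens_pderiv A hB j]
  funext x
  rw [pderiv]
  have hd : DifferentiableAt ℝ (dens A) x := (dens_differentiable A) x
  have hg : DifferentiableAt ℝ (fun y : Fin n → ℝ => -((A⁻¹ *ᵥ y) j)) x :=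
    ((mulVec_differentiable A⁻¹ j) x).neg
  rw [fderiv_fun_mul hd hg]
  simp only [ContinuousLinearMap.add_apply, ContinuousLinearMap.smul_apply, smul_eq_mul]
  have h1 : fderiv ℝ (fun y : Fin n → ℝ => -((A⁻¹ *ᵥ y) j)) x (Pi.single i 1) = -(A⁻¹ i j) := by
    rw [(((mulVec_hasFDerivAt A⁻¹ j x)).fun_neg).fderiv]
    simp only [ContinuousLinearMap.neg_apply, ContinuousLinearMap.sum_apply,
      ContinuousLinearMap.smul_apply, ContinuousLinearMap.proj_apply, Pi.single_apply,
      smul_eq_mul]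
    have : ∀ k, A⁻¹ j k * (if k = i then (1:ℝ) else 0) = if k = i then A⁻¹ j i else 0 := by
      intro k; by_cases h : k = i <;> simp [h]
    rw [Finset.sum_congr rfl fun k _ => this k]
    simp only [Finset.sum_ite_eq', Finset.mem_univ, if_true]
    have : A⁻¹ j i = A⁻¹ i j := by
      conv_lhs => rw [← hB]
      rfl
    rw [this]
  have h2 : fderiv ℝ (dens A) x (Pi.single i 1) = dens A x * (-((A⁻¹ *ᵥ x) i)) :=
    congrFun (dens_pderiv A hB i) x
  rw [h1, h2]
  ring

lemma pderiv_contDiff {F : (Fin n → ℝ) → ℝ} (hF : ContDiff ℝ (⊤ : ℕ∞) F) (i : Fin n) :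
    ContDiff ℝ (⊤ : ℕ∞) (pderiv i F) := by
  have h1 : ContDiff ℝ (⊤ : ℕ∞) (fderiv ℝ F) := hF.fderiv_right (by simp)
  have h2 := (ContinuousLinearMap.apply ℝ ℝ (Pi.single i 1 : Fin n → ℝ) :
      ((Fin n → ℝ) →L[ℝ] ℝ) →L[ℝ] ℝ).contDiff.comp h1
  exact h2

lemma pderiv_hasCompactSupport {F : (Fin n → ℝ) → ℝ} (hFc : HasCompactSupport F) (i : Fin n) :
    HasCompactSupport (pderiv i F) :=
  hFc.fderiv_apply ℝ (Pi.single i 1)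


variable {n : ℕ}

lemma integrable_cpt_right {f g : (Fin n → ℝ) → ℝ} (hg : Continuous g)
    (hf : Continuous f) (hsf : HasCompactSupport f) :
    Integrable (fun x => g x * f x) := by
  exact (hg.mul hf).integrable_of_hasCompactSupport (hsf.mul_left)

lemma ibp (A : Matrix (Fin n) (Fin n) ℝ) (hB : A⁻¹.IsSymm) {F : (Fin n → ℝ) → ℝ}
    (hF : ContDiff ℝ (⊤ : ℕ∞) F) (hFc : HasCompactSupport F) (i j : Fin n) :
    ∫ x, F x * (dens A x * ((A⁻¹ *ᵥ x) i * (A⁻¹ *ᵥ x) j - A⁻¹ i j))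
      = ∫ x, pderiv j (pderiv i F) x * dens A x := by
  have hFdiff : Differentiable ℝ F := hF.differentiable (by simp)
  have hdensc : Continuous (dens A) := (dens_differentiable A).continuous
  have hlinc : ∀ k : Fin n, Continuous (fun y : Fin n → ℝ => (A⁻¹ *ᵥ y) k) :=
    fun k => (mulVec_differentiable A⁻¹ k).continuous
  have hPiF : ContDiff ℝ (⊤ : ℕ∞) (pderiv i F) := pderiv_contDiff hF i
  have hPiFc : HasCompactSupport (pderiv i F) := pderiv_hasCompactSupport hFc i
  have hGdiff : Differentiable ℝ (fun y => dens A y * (-((A⁻¹ *ᵥ y) j))) :=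
    (dens_differentiable A).mul ((mulVec_differentiable A⁻¹ j).neg)
  have hGc : Continuous (fun y => dens A y * (-((A⁻¹ *ᵥ y) j))) := hGdiff.continuous
  have hHc : Continuous (fun x => dens A x * ((A⁻¹ *ᵥ x) i * (A⁻¹ *ᵥ x) j - A⁻¹ i j)) :=
    hdensc.mul (((hlinc i).mul (hlinc j)).sub continuous_const)
  have fG : ∀ x, fderiv ℝ (fun y => dens A y * (-((A⁻¹ *ᵥ y) j))) x (Pi.single i 1)
      = dens A x * ((A⁻¹ *ᵥ x) i * (A⁻¹ *ᵥ x) j - A⁻¹ i j) := by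
    intro x
    rw [← dens_pderiv A hB j]
    exact congrFun (dens_pderiv_pderiv A hB i j) x
  have fD : ∀ x, fderiv ℝ (dens A) x (Pi.single j 1) = dens A x * (-((A⁻¹ *ᵥ x) j)) :=
    fun x => congrFun (dens_pderiv A hB j) x
  have fF : ∀ x, fderiv ℝ F x (Pi.single i 1) = pderiv i F x := fun x => rfl
  have fPiF : ∀ x, fderiv ℝ (pderiv i F) x (Pi.single j 1) = pderiv j (pderiv i F) x :=
    fun x => rfl
  -- step 1
  have e1 := integral_mul_fderiv_eq_neg_fderiv_mul_of_integrable (μ := volume)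
      (f := fun y => dens A y * (-((A⁻¹ *ᵥ y) j))) (g := F) (v := Pi.single i 1)
      ?_ ?_ ?_ (fun x _ => hGdiff x) (fun x _ => hFdiff x)
  rotate_left
  · simp only [fG]
    exact integrable_cpt_right hHc hF.continuous hFc
  · simp only [fF]
    exact integrable_cpt_right hGc hPiF.continuous hPiFc
  · exact integrable_cpt_right hGc hF.continuous hFc
  -- step 2
  have e2 := integral_mul_fderiv_eq_neg_fderiv_mul_of_integrable (μ := volume)
      (f := dens A) (g := pderiv i F) (v := Pi.single j 1)
      ?_ ?_ ?_ (fun x _ => dens_differentiable A x) (fun x _ => hPiF.differentiable (by simp) x)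
  rotate_left
  · simp only [fD]
    exact integrable_cpt_right hGc hPiF.continuous hPiFc
  · simp only [fPiF]
    exact integrable_cpt_right hdensc (pderiv_contDiff hPiF j).continuous
      (pderiv_hasCompactSupport hPiFc j)
  · exact integrable_cpt_right hdensc hPiF.continuous hPiFc
  simp only [fG, fF] at e1
  simp only [fD, fPiF] at e2
  have c1 : ∫ x, F x * (dens A x * ((A⁻¹ *ᵥ x) i * (A⁻¹ *ᵥ x) j - A⁻¹ i j))
      = ∫ x, dens A x * ((A⁻¹ *ᵥ x) i * (A⁻¹ *ᵥ x) j - A⁻¹ i j) * F x := by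
    congr 1; funext x; ring
  have c2 : ∫ x, pderiv j (pderiv i F) x * dens A x
      = ∫ x, dens A x * pderiv j (pderiv i F) x := by
    congr 1; funext x; ring
  rw [c1, c2]
  linarith [e1, e2]


variable {n : ℕ}

section joint
variable {C C' : ℝ → Matrix (Fin n) (Fin n) ℝ} {U : Set ℝ}

lemma hfst {f : ℝ → ℝ} (h : ContinuousOn f U) :
    ContinuousOn (fun p : ℝ × (Fin n → ℝ) => f p.1) (U ×ˢ (Set.univ : Set (Fin n → ℝ))) :=
  h.comp continuous_fst.continuousOn (fun _ hp => hp.1)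

lemma hxc (k : Fin n) :
    ContinuousOn (fun p : ℝ × (Fin n → ℝ) => p.2 k) (U ×ˢ (Set.univ : Set (Fin n → ℝ))) :=
  ((continuous_apply k).comp continuous_snd).continuousOn

lemma quadc {M : ℝ → Matrix (Fin n) (Fin n) ℝ}
    (hM : ∀ i j, ContinuousOn (fun s => M s i j) U) :
    ContinuousOn (fun p : ℝ × (Fin n → ℝ) => p.2 ⬝ᵥ (M p.1 *ᵥ p.2))
      (U ×ˢ (Set.univ : Set (Fin n → ℝ))) := by
  have : (fun p : ℝ × (Fin n → ℝ) => p.2 ⬝ᵥ (M p.1 *ᵥ p.2))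
      = fun p => ∑ i, ∑ j, p.2 i * (M p.1 i j * p.2 j) := by
    funext p; rw [quad_eq_sum]
  rw [this]
  apply continuousOn_finset_sum; intro i _
  apply continuousOn_finset_sum; intro j _
  exact (hxc i).mul ((hfst (hM i j)).mul (hxc j))

lemma densc (hinv : ∀ i j, ContinuousOn (fun s => (C s)⁻¹ i j) U)
    (hdet : ContinuousOn (fun s => (C s).det) U)
    (hpos : ∀ s ∈ U, 0 < (C s).det) :
    ContinuousOn (fun p : ℝ × (Fin n → ℝ) => dens (C p.1) p.2)
      (U ×ˢ (Set.univ : Set (Fin n → ℝ))) := by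
  show ContinuousOn (fun p : ℝ × (Fin n → ℝ) =>
    (Real.sqrt ((2 * π) ^ n * (C p.1).det))⁻¹ *
      Real.exp (-(p.2 ⬝ᵥ ((C p.1)⁻¹ *ᵥ p.2)) / 2)) _
  apply ContinuousOn.mul
  · apply ContinuousOn.inv₀
    · exact Real.continuous_sqrt.comp_continuousOn (continuousOn_const.mul (hfst hdet))
    · intro p hp
      have h1 : (0:ℝ) < (2 * π) ^ n * (C p.1).det := by
        have := hpos p.1 hp.1
        have h2 : (0:ℝ) < (2 * π) ^ n := by positivity
        positivity
      exact (Real.sqrt_pos.mpr h1).ne'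
  · exact Real.continuous_exp.comp_continuousOn ((quadc hinv).neg.div_const 2)

lemma psic (hC' : ∀ i j, ContinuousOn (fun s => C' s i j) U)
    (hinv : ∀ i j, ContinuousOn (fun s => (C s)⁻¹ i j) U)
    (hdet : ContinuousOn (fun s => (C s).det) U)
    (hpos : ∀ s ∈ U, 0 < (C s).det) :
    ContinuousOn (fun p : ℝ × (Fin n → ℝ) =>
      dens (C p.1) p.2 * ((1:ℝ)/2) *
        (p.2 ⬝ᵥ (((C p.1)⁻¹ * C' p.1 * (C p.1)⁻¹) *ᵥ p.2) - ((C p.1)⁻¹ * C' p.1).trace))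
      (U ×ˢ (Set.univ : Set (Fin n → ℝ))) := by
  have centries : ∀ i j, ContinuousOn (fun s => ((C s)⁻¹ * C' s * (C s)⁻¹) i j) U := by
    intro i j
    have : (fun s => ((C s)⁻¹ * C' s * (C s)⁻¹) i j)
        = fun s => ∑ b, (∑ a, (C s)⁻¹ i a * C' s a b) * (C s)⁻¹ b j := by
      funext s; simp [Matrix.mul_apply]
    rw [this]
    apply continuousOn_finset_sum; intro b _
    exact (continuousOn_finset_sum _ fun a _ => (hinv i a).mul (hC' a b)).mul (hinv b j)
  have ctrace : ContinuousOn (fun s => ((C s)⁻¹ * C' s).trace) U := by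
    have : (fun s => ((C s)⁻¹ * C' s).trace)
        = fun s => ∑ i, ∑ a, (C s)⁻¹ i a * C' s a i := by
      funext s; simp [Matrix.trace, Matrix.diag, Matrix.mul_apply]
    rw [this]
    apply continuousOn_finset_sum; intro i _
    exact continuousOn_finset_sum _ fun a _ => (hinv i a).mul (hC' a i)
  exact ((densc hinv hdet hpos).mul continuousOn_const).mul
    ((quadc centries).sub (hfst ctrace))

end joint

lemma quad_differentiable (M : Matrix (Fin n) (Fin n) ℝ) :
    Differentiable ℝ (fun x : Fin n → ℝ => x ⬝ᵥ (M *ᵥ x)) :=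
  fun x => (quad_hasFDerivAt M x).differentiableAt

lemma quad_BAB (B A' : Matrix (Fin n) (Fin n) ℝ) (hB : B.IsSymm) (x : Fin n → ℝ) :
    x ⬝ᵥ ((B * A' * B) *ᵥ x) = ∑ i, ∑ j, A' i j * ((B *ᵥ x) i * (B *ᵥ x) j) := by
  have h1 : (B * A' * B) *ᵥ x = B *ᵥ (A' *ᵥ (B *ᵥ x)) := by
    rw [Matrix.mulVec_mulVec, Matrix.mulVec_mulVec]
  rw [h1, Matrix.dotProduct_mulVec]
  have h2 : x ᵥ* B = B *ᵥ x := by rw [← Matrix.mulVec_transpose, hB]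
  rw [h2, quad_eq_sum]
  exact Finset.sum_congr rfl fun i _ => Finset.sum_congr rfl fun j _ => by ring

lemma trace_mul_symm (B A' : Matrix (Fin n) (Fin n) ℝ) (hB : B.IsSymm) :
    (B * A').trace = ∑ i, ∑ j, A' i j * B i j := by
  have h0 : (B * A').trace = ∑ i, ∑ j, B i j * A' j i := by
    simp [Matrix.trace, Matrix.diag, Matrix.mul_apply]
  rw [h0, Finset.sum_comm]
  apply Finset.sum_congr rfl; intro i _
  apply Finset.sum_congr rfl; intro j _
  have hji : B j i = B i j := by
    conv_lhs => rw [← hB]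
    rfl
  rw [hji]; ring

theorem gaussian_covariance_derivative
    {n : ℕ} (l u : ℝ)
    (C C' : ℝ → Matrix (Fin n) (Fin n) ℝ)
    (hderiv : ∀ i j : Fin n, ∀ t ∈ Set.Ioo l u,
      HasDerivAt (fun s => C s i j) (C' t i j) t)
    (hcont : ∀ i j : Fin n, ContinuousOn (fun t => C' t i j) (Set.Ioo l u))
    (hsymm : ∀ t ∈ Set.Ioo l u, (C t).IsSymm)
    (hposdef : ∀ t ∈ Set.Ioo l u, (C t).PosDef)
    (F : (Fin n → ℝ) → ℝ) (hF : ContDiff ℝ (⊤ : ℕ∞) F) (hFc : HasCompactSupport F) :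
    ∀ t ∈ Set.Ioo l u,
      HasDerivAt (fun s => gaussianIntegral (C s) F)
        ((1 / 2) * ∑ i : Fin n, ∑ j : Fin n,
          C' t i j * gaussianIntegral (C t) (pderiv i (pderiv j F))) t := by
  intro t ht
  -- basic facts
  have hdetpos : ∀ s ∈ Set.Ioo l u, 0 < (C s).det := fun s hs => (hposdef s hs).det_pos
  have hounit : ∀ s ∈ Set.Ioo l u, IsUnit (C s).det :=
    fun s hs => isUnit_iff_ne_zero.mpr (hdetpos s hs).ne'
  have hunit_near : ∀ s ∈ Set.Ioo l u, ∀ᶠ r in nhds s, IsUnit (C r).det :=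
    fun s hs => Filter.eventually_of_mem (isOpen_Ioo.mem_nhds hs) (fun r hr => hounit r hr)
  have hderiv' : ∀ s ∈ Set.Ioo l u, ∀ i j, HasDerivAt (fun r => C r i j) (C' s i j) s :=
    fun s hs i j => hderiv i j s hs
  have hBsymm : ∀ s ∈ Set.Ioo l u, ((C s)⁻¹).IsSymm := by
    intro s hs
    unfold Matrix.IsSymm
    rw [Matrix.transpose_nonsing_inv, (hsymm s hs)]
  have hC'sym : ∀ i j, C' t i j = C' t j i := by
    intro i j
    have h1 : HasDerivAt (fun s => C s i j) (C' t i j) t := hderiv i j t ht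
    have h2 : HasDerivAt (fun s => C s i j) (C' t j i) t := by
      apply (hderiv j i t ht).congr_of_eventuallyEq
      filter_upwards [isOpen_Ioo.mem_nhds ht] with s hs
      conv_rhs => rw [← hsymm s hs]
      rfl
    exact h1.unique h2
  -- choice of ε
  obtain ⟨δ, δpos, hδ⟩ := Metric.isOpen_iff.mp isOpen_Ioo t ht
  set ε := δ/2 with hεdef
  have εpos : 0 < ε := by positivity
  have hIcc : Set.Icc (t-ε) (t+ε) ⊆ Set.Ioo l u := by
    intro s hs
    apply hδ
    rw [Metric.mem_ball, Real.dist_eq]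
    have h1 := hs.1; have h2 := hs.2
    have : |s - t| ≤ ε := abs_le.mpr ⟨by linarith, by linarith⟩
    linarith
  have hballIcc : Metric.ball t ε ⊆ Set.Icc (t-ε) (t+ε) := by
    intro s hs
    rw [Metric.mem_ball, Real.dist_eq] at hs
    have := abs_lt.mp hs
    exact ⟨by linarith [this.1], by linarith [this.2]⟩
  have hball : Metric.ball t ε ⊆ Set.Ioo l u := subset_trans hballIcc hIcc
  -- continuity of components on Ioo
  have cdet : ContinuousOn (fun s => (C s).det) (Set.Ioo l u) := fun s hs =>
    (det_differentiableAt (fun i j => (hderiv i j s hs).differentiableAt)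
      ).continuousAt.continuousWithinAt
  have cinv : ∀ i j, ContinuousOn (fun s => (C s)⁻¹ i j) (Set.Ioo l u) := fun i j s hs =>
    (inv_entry_differentiableAt (fun i j => (hderiv i j s hs).differentiableAt)
      (hounit s hs) i j).continuousAt.continuousWithinAt
  -- the joint continuous majorant
  have hψ := psic (C := C) (C' := C') hcont cinv cdet hdetpos
  have hΨ : ContinuousOn (fun p : ℝ × (Fin n → ℝ) =>
      F p.2 * (dens (C p.1) p.2 * ((1:ℝ)/2) *
        (p.2 ⬝ᵥ (((C p.1)⁻¹ * C' p.1 * (C p.1)⁻¹) *ᵥ p.2) - ((C p.1)⁻¹ * C' p.1).trace)))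
      ((Set.Ioo l u) ×ˢ (Set.univ : Set (Fin n → ℝ))) :=
    ((hF.continuous.comp continuous_snd).continuousOn).mul hψ
  set K := tsupport F with hKdef
  have hKc : IsCompact K := hFc
  have hSK : IsCompact ((Set.Icc (t-ε) (t+ε)) ×ˢ K) := isCompact_Icc.prod hKc
  have hΨ' := hΨ.mono (Set.prod_mono hIcc (Set.subset_univ K))
  obtain ⟨M, hM⟩ := hSK.exists_bound_of_continuousOn hΨ'
  -- the derivative integrand
  set D : ℝ → (Fin n → ℝ) → ℝ := fun s x =>
    F x * (dens (C s) x * ((1:ℝ)/2) *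
      (x ⬝ᵥ (((C s)⁻¹ * C' s * (C s)⁻¹) *ᵥ x) - ((C s)⁻¹ * C' s).trace)) with hD
  have key := hasDerivAt_integral_of_dominated_loc_of_deriv_le
      (F := fun s x => F x * dens (C s) x) (F' := D)
      (bound := K.indicator fun _ => M) (μ := volume) (x₀ := t) (Metric.ball_mem_nhds t εpos)
      ?meas ?int ?meas' ?bound ?bint ?diff
  case meas =>
    filter_upwards with s
    exact (hF.continuous.mul (dens_differentiable (C s)).continuous).aestronglyMeasurable
  case int =>
    exact (hF.continuous.mul (dens_differentiable (C t)).continuous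
      ).integrable_of_hasCompactSupport hFc.mul_right
  case meas' =>
    apply Continuous.aestronglyMeasurable
    apply hF.continuous.mul
    apply Continuous.mul
    · exact ((dens_differentiable (C t)).continuous).mul continuous_const
    · apply Continuous.sub
      · exact (quad_differentiable _).continuous
      · exact continuous_const
  case bound =>
    filter_upwards with x
    intro s hs
    by_cases hx : x ∈ K
    · rw [Set.indicator_of_mem hx]
      exact hM (s, x) ⟨hballIcc hs, hx⟩
    · rw [Set.indicator_of_notMem hx]
      have : F x = 0 := image_eq_zero_of_notMem_tsupport hx
      simp [hD, this]
  case bint =>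
    rw [integrable_indicator_iff (isClosed_tsupport F).measurableSet]
    exact integrableOn_const hKc.measure_lt_top.ne
  case diff =>
    filter_upwards with x
    intro s hs
    have hsI := hball hs
    exact (dens_hasDerivAt (hderiv' s hsI) (hunit_near s hsI) (hdetpos s hsI) x).const_mul (F x)
  -- now rewrite the value of the derivative
  have hmain : HasDerivAt (fun s => ∫ x, F x * dens (C s) x) (∫ x, D t x) t := key.2
  have hgauss : (fun s => gaussianIntegral (C s) F) = fun s => ∫ x, F x * dens (C s) x := rfl
  rw [hgauss]
  convert hmain using 1
  -- final identity for the value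
  have hBs : ((C t)⁻¹).IsSymm := hBsymm t ht
  have hpt : ∀ x : Fin n → ℝ, D t x = ∑ i, ∑ j, C' t i j *
      (((1:ℝ)/2) * (F x * (dens (C t) x *
        (((C t)⁻¹ *ᵥ x) i * ((C t)⁻¹ *ᵥ x) j - (C t)⁻¹ i j)))) := by
    intro x
    rw [hD]
    simp only
    rw [quad_BAB _ _ hBs, trace_mul_symm _ _ hBs]
    simp only [← Finset.sum_sub_distrib, Finset.mul_sum]
    apply Finset.sum_congr rfl; intro i _
    apply Finset.sum_congr rfl; intro j _
    ring
  have hint : ∀ i j : Fin n, Integrable (fun x => F x * (dens (C t) x *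
      (((C t)⁻¹ *ᵥ x) i * ((C t)⁻¹ *ᵥ x) j - (C t)⁻¹ i j))) := by
    intro i j
    have hc : Continuous (fun x : Fin n → ℝ => dens (C t) x *
        (((C t)⁻¹ *ᵥ x) i * ((C t)⁻¹ *ᵥ x) j - (C t)⁻¹ i j)) :=
      (dens_differentiable (C t)).continuous.mul
        (((mulVec_differentiable _ i).continuous.mul
          (mulVec_differentiable _ j).continuous).sub continuous_const)
    have := integrable_cpt_right hc hF.continuous hFc
    simpa [mul_comm] using this
  calc (1 / 2) * ∑ i : Fin n, ∑ j : Fin n,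
        C' t i j * gaussianIntegral (C t) (pderiv i (pderiv j F))
      = ∑ i : Fin n, ∑ j : Fin n, C' t i j *
          (((1:ℝ)/2) * gaussianIntegral (C t) (pderiv i (pderiv j F))) := by
        rw [Finset.mul_sum]
        apply Finset.sum_congr rfl; intro i _
        rw [Finset.mul_sum]
        apply Finset.sum_congr rfl; intro j _
        ring
    _ = ∑ i : Fin n, ∑ j : Fin n, C' t i j *
          (((1:ℝ)/2) * gaussianIntegral (C t) (pderiv j (pderiv i F))) := by
        rw [Finset.sum_comm]
        apply Finset.sum_congr rfl; intro i _
        apply Finset.sum_congr rfl; intro j _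
        rw [hC'sym i j]
    _ = ∑ i : Fin n, ∑ j : Fin n, C' t i j *
          (((1:ℝ)/2) * ∫ x, F x * (dens (C t) x *
            (((C t)⁻¹ *ᵥ x) i * ((C t)⁻¹ *ᵥ x) j - (C t)⁻¹ i j))) := by
        apply Finset.sum_congr rfl; intro i _
        apply Finset.sum_congr rfl; intro j _
        rw [ibp (C t) hBs hF hFc i j]
        rfl
    _ = ∫ x, ∑ i, ∑ j, C' t i j * (((1:ℝ)/2) * (F x * (dens (C t) x *
            (((C t)⁻¹ *ᵥ x) i * ((C t)⁻¹ *ᵥ x) j - (C t)⁻¹ i j)))) := by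
        rw [integral_finset_sum]
        · apply Finset.sum_congr rfl; intro i _
          rw [integral_finset_sum]
          · apply Finset.sum_congr rfl; intro j _
            rw [← integral_const_mul, ← integral_const_mul]
          · intro j _
            exact ((hint i j).const_mul _).const_mul _
        · intro i _
          apply integrable_finset_sum
          intro j _
          exact ((hint i j).const_mul _).const_mul _
    _ = ∫ x, D t x := by
        congr 1
        funext x
        rw [hpt x]

end SommerfieldStmt5
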